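/- arXiv:2106.03927 — 2 statements merged into one kernel-verified Lean document; each statement's English description precedes it below -/
import Mathlib

section
/- In any two-player normal form game with a Pareto Mediator, for each player i, the mediated strategy (s_i, delegate) weakly dominates (s_i, not delegate): for every strategy of the opponent in the mediated game, player i's utility from delegating action s_i is at least their utility from playing s_i without delegating. -/
/-- In a two-player normal form game with a Pareto Mediator, for each
player, delegating an action weakly dominates playing that same action without
delegating: against every mediated strategy of the opponent, the delegating
player's utility is at least their utility from not delegating. -/
theorem pareto_mediator_delegate_weakly_dominant
    {S1 S2 : Type} [Fintype S1] [Fintype S2]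
    (u1 u2 : S1 → S2 → ℝ)
    -- `M a b` is the profile output by the Pareto Mediator when both players delegate (a, b)
    (M : S1 → S2 → S1 × S2)
    -- the mediator's output weakly Pareto dominates the submitted profile
    (hM1 : ∀ a b, u1 (M a b).1 (M a b).2 ≥ u1 a b)
    (hM2 : ∀ a b, u2 (M a b).1 (M a b).2 ≥ u2 a b)
    -- the mediator maximizes total utility among weakly dominating profiles
    (hMopt : ∀ a b, ∀ p : S1 × S2, u1 p.1 p.2 ≥ u1 a b → u2 p.1 p.2 ≥ u2 a b →
      u1 p.1 p.2 + u2 p.1 p.2 ≤ u1 (M a b).1 (M a b).2 + u2 (M a b).1 (M a b).2)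
    -- mediated-game payoffs
    (U1 U2 : S1 × Bool → S2 × Bool → ℝ)
    (hU1no : ∀ a b (d1 d2 : Bool), ¬(d1 = true ∧ d2 = true) → U1 (a, d1) (b, d2) = u1 a b)
    (hU2no : ∀ a b (d1 d2 : Bool), ¬(d1 = true ∧ d2 = true) → U2 (a, d1) (b, d2) = u2 a b)
    (hU1yes : ∀ a b, U1 (a, true) (b, true) = u1 (M a b).1 (M a b).2)
    (hU2yes : ∀ a b, U2 (a, true) (b, true) = u2 (M a b).1 (M a b).2) :
    (∀ (a : S1) (t : S2 × Bool), U1 (a, false) t ≤ U1 (a, true) t) ∧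
    (∀ (b : S2) (t : S1 × Bool), U2 t (b, false) ≤ U2 t (b, true)) := by
  constructor
  · rintro a ⟨b, d2⟩
    cases d2 with
    | false =>
      rw [hU1no a b false false (by simp), hU1no a b true false (by simp)]
    | true =>
      rw [hU1no a b false true (by simp), hU1yes]
      exact hM1 a b
  · rintro b ⟨a, d1⟩
    cases d1 with
    | false =>
      rw [hU2no a b false false (by simp), hU2no a b false true (by simp)]
    | true =>
      rw [hU2no a b true false (by simp), hU2yes]
      exact hM2 a b
end

section
/- In a two-player game with the Punishing Mediator, delegating is not in general weakly dominant: there exists a finite two-player game and a player strategy such that delegating that strategy yields strictly lower utility than not delegating, against some opponent strategy in the mediated game. -/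
/-- Delegating to the Punishing Mediator is not in general weakly
dominant: there is a finite two-player game (with Punishing Mediator data) and a
strategy of player 1 such that, against some opponent mediated strategy, delegating
that strategy yields strictly lower utility than playing it without delegating. -/
theorem punishing_mediator_delegation_not_weakly_dominant :
    ∃ (u1 u2 : Fin 2 → Fin 2 → ℝ) (m : Fin 2 × Fin 2)
      (π1 : Fin 2 → Fin 2) (π2 : Fin 2 → Fin 2)
      (U1 : Fin 2 × Bool → Fin 2 × Bool → ℝ),
      -- both-delegate profile maximizes total utility
      (∀ p : Fin 2 × Fin 2, u1 p.1 p.2 + u2 p.1 p.2 ≤ u1 m.1 m.2 + u2 m.1 m.2) ∧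
      -- punishing actions minimize the non-delegator's utility
      (∀ b a, u2 (π1 b) b ≤ u2 a b) ∧
      (∀ a b, u1 a (π2 a) ≤ u1 a b) ∧
      -- mediated payoffs of player 1
      (∀ a b, U1 (a, false) (b, false) = u1 a b) ∧
      (∀ a b, U1 (a, true) (b, false) = u1 (π1 b) b) ∧
      (∀ a b, U1 (a, false) (b, true) = u1 a (π2 a)) ∧
      (∀ a b, U1 (a, true) (b, true) = u1 m.1 m.2) ∧
      -- delegating strategy s does strictly worse than not delegating it, against
      -- some opponent mediated strategy t
      (∃ (s : Fin 2) (t : Fin 2 × Bool), U1 (s, true) t < U1 (s, false) t) := by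
  refine ⟨fun a b => if a = 1 ∧ b = 0 then 1 else 0,
          fun a _ => if a = 1 then 1 else 0,
          (1, 0), fun _ => 0, fun _ => 1,
          fun p q => if p.2 then (if q.2 then 1 else 0)
                     else (if q.2 then 0 else if p.1 = 1 ∧ q.1 = 0 then 1 else 0),
          ?_, ?_, ?_, ?_, ?_, ?_, ?_, ?_⟩
  · rintro ⟨a, b⟩
    fin_cases a <;> fin_cases b <;> norm_num
  · intro b a
    fin_cases a <;> norm_num
  · intro a b
    fin_cases a <;> fin_cases b <;> norm_num
  · intro a b; simp
  · intro a b
    fin_cases b <;> norm_num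
  · intro a b
    fin_cases a <;> norm_num
  · intro a b; norm_num
  · exact ⟨1, (0, false), by norm_num⟩
end
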